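/- arXiv:2502.09531 — 3 statements merged into one kernel-verified Lean document; each statement's English description precedes it below -/
import Mathlib

section
/- If y : [0,L] → ℝ is C² with y'(0) = 0, then ∫₀ᴸ (y'(x))² dx ≤ (4L²/π²) ∫₀ᴸ (y''(x))² dx. -/
/-!
If `w' = -c - w²` on `[a, b]`, then `(f² w)' = f'² - c f² - (f' - f w)²`, so integrating
gives `c ∫ f² ≤ ∫ f'²` up to the boundary terms `[f² w]ₐᵇ`. For `c = k²` with
`k < π / (2L)` the solution `w x = k tan (k (L - x))` is smooth on `[0, L]` and vanishes at
`L`, while `f 0 = 0` kills the other boundary term; letting `k ↑ π / (2L)` gives the sharp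
constant. At `k = π / (2L)` itself `w` would be singular at `0`, which is why the limit is
taken.
-/

open Real MeasureTheory Set

theorem sub_le_integral_deriv_sq_sub_of_riccati {a b c : ℝ} {f f' w : ℝ → ℝ} (hab : a ≤ b)
    (hf : ∀ x ∈ Icc a b, HasDerivWithinAt f (f' x) (Icc a b) x)
    (hf' : ContinuousOn f' (Icc a b))
    (hw : ContinuousOn w (Icc a b)) (hw' : ∀ x ∈ Ioo a b, HasDerivAt w (-c - w x ^ 2) x) :
    f b ^ 2 * w b - f a ^ 2 * w a ≤ ∫ x in a..b, (f' x ^ 2 - c * f x ^ 2) := by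
  have hfc : ContinuousOn f (Icc a b) := fun x hx => (hf x hx).continuousWithinAt
  refine intervalIntegral.sub_le_integral_of_hasDeriv_right_of_le (g' := fun x =>
      2 * f x * f' x * w x + f x ^ 2 * (-c - w x ^ 2)) hab ((hfc.pow 2).mul hw)
    (fun x hx => ?_) (((hf'.pow 2).sub (continuousOn_const.mul (hfc.pow 2))).integrableOn_Icc)
    (fun x hx => ?_)
  · have hfx : HasDerivAt f (f' x) x :=
      (hf x (Ioo_subset_Icc_self hx)).hasDerivAt (Icc_mem_nhds hx.1 hx.2)
    refine (((hfx.pow 2).mul (hw' x hx)).hasDerivWithinAt).congr_deriv ?_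
    simp only [Pi.pow_apply, Nat.cast_ofNat]; ring
  · nlinarith [sq_nonneg (f' x - f x * w x)]

theorem hasDerivAt_mul_tan_mul_sub {k L x : ℝ} (hx : cos (k * (L - x)) ≠ 0) :
    HasDerivAt (fun t => k * tan (k * (L - t))) (-k ^ 2 - (k * tan (k * (L - x))) ^ 2) x := by
  have h := ((hasDerivAt_tan hx).comp x (((hasDerivAt_id x).const_sub L).const_mul k)).const_mul k
  refine h.congr_deriv ?_
  rw [tan_eq_sin_div_cos]
  field_simp
  linear_combination k ^ 2 * sin_sq_add_cos_sq (k * (L - x))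

theorem sq_mul_integral_sq_le_integral_deriv_sq {L k : ℝ} {f f' : ℝ → ℝ} (hL : 0 ≤ L)
    (hf : ∀ x ∈ Icc 0 L, HasDerivWithinAt f (f' x) (Icc 0 L) x)
    (hf' : ContinuousOn f' (Icc 0 L))
    (h0 : f 0 = 0) (hk : 0 ≤ k) (hkL : k * L < π / 2) :
    k ^ 2 * ∫ x in 0..L, f x ^ 2 ≤ ∫ x in 0..L, f' x ^ 2 := by
  have hcos : ∀ x ∈ Icc 0 L, cos (k * (L - x)) ≠ 0 := fun x hx => by
    refine (cos_pos_of_mem_Ioo ⟨?_, ?_⟩).ne' <;> nlinarith [hx.1, hx.2, pi_pos]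
  have hw : ∀ x ∈ Icc 0 L, HasDerivAt (fun t => k * tan (k * (L - t)))
      (-k ^ 2 - (k * tan (k * (L - x))) ^ 2) x :=
    fun x hx => hasDerivAt_mul_tan_mul_sub (hcos x hx)
  have h := sub_le_integral_deriv_sq_sub_of_riccati hL hf hf'
    (fun x hx => (hw x hx).continuousAt.continuousWithinAt)
    (fun x hx => hw x (Ioo_subset_Icc_self hx))
  have hf2 : IntervalIntegrable (fun x => f x ^ 2) volume 0 L :=
    (ContinuousOn.pow (fun x hx => (hf x hx).continuousWithinAt) 2).intervalIntegrable_of_Icc hL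
  have hf'2 : IntervalIntegrable (fun x => f' x ^ 2) volume 0 L :=
    (hf'.pow 2).intervalIntegrable_of_Icc hL
  rw [intervalIntegral.integral_sub hf'2 (hf2.const_mul _),
    intervalIntegral.integral_const_mul] at h
  simp only [sub_self, mul_zero, tan_zero, h0, ne_eq, OfNat.ofNat_ne_zero, not_false_eq_true,
    zero_pow, sub_zero, zero_mul, sub_nonneg] at h
  exact h

theorem pi_div_two_mul_sq_integral_sq_le_integral_deriv_sq {L : ℝ} {f f' : ℝ → ℝ}
    (hL : 0 < L)
    (hf : ∀ x ∈ Icc 0 L, HasDerivWithinAt f (f' x) (Icc 0 L) x)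
    (hf' : ContinuousOn f' (Icc 0 L))
    (h0 : f 0 = 0) :
    (π / (2 * L)) ^ 2 * ∫ x in 0..L, f x ^ 2 ≤ ∫ x in 0..L, f' x ^ 2 := by
  have hK : 0 < π / (2 * L) := by positivity
  refine le_of_tendsto (((continuous_pow 2).mul continuous_const).tendsto _ |>.mono_left
    nhdsWithin_le_nhds) (Filter.eventually_of_mem (Ioo_mem_nhdsLT hK) fun k hk => ?_)
  refine sq_mul_integral_sq_le_integral_deriv_sq hL.le hf hf' h0 hk.1.le ?_
  calc k * L < π / (2 * L) * L := by gcongr; exact hk.2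
    _ = π / 2 := by field_simp

theorem wirtinger_first_derivative_general
    (L : ℝ) (hL : 0 < L) (y' y'' : ℝ → ℝ)
    (hy2 : ∀ x ∈ Icc (0:ℝ) L, HasDerivWithinAt y' (y'' x) (Icc (0:ℝ) L) x)
    (hy2c : ContinuousOn y'' (Icc (0:ℝ) L))
    (h0' : y' 0 = 0) :
    ∫ x in (0:ℝ)..L, (y' x)^2 ≤
      (4 * L^2 / Real.pi^2) * ∫ x in (0:ℝ)..L, (y'' x)^2 := by
  have h := pi_div_two_mul_sq_integral_sq_le_integral_deriv_sq hL hy2 hy2c h0'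
  have hc : 4 * L ^ 2 / π ^ 2 * (π / (2 * L)) ^ 2 = 1 := by field_simp; ring
  calc ∫ x in 0..L, y' x ^ 2
        = 4 * L ^ 2 / π ^ 2 * ((π / (2 * L)) ^ 2 * ∫ x in 0..L, y' x ^ 2) := by
          rw [← mul_assoc, hc, one_mul]
    _ ≤ 4 * L ^ 2 / π ^ 2 * ∫ x in 0..L, y'' x ^ 2 := by gcongr

/-- For y ∈ C²([0,L]) with y'(0)=0:
    ∫₀ᴸ (y')² ≤ (4L²/π²)∫₀ᴸ (y'')². -/
theorem wirtinger_first_derivative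
    (L : ℝ) (hL : 0 < L) (y y' y'' : ℝ → ℝ)
    (hy1 : ∀ x ∈ Icc (0:ℝ) L, HasDerivWithinAt y (y' x) (Icc (0:ℝ) L) x)
    (hy2 : ∀ x ∈ Icc (0:ℝ) L, HasDerivWithinAt y' (y'' x) (Icc (0:ℝ) L) x)
    (hy2c : ContinuousOn y'' (Icc (0:ℝ) L))
    (h0' : y' 0 = 0) :
    ∫ x in (0:ℝ)..L, (y' x)^2 ≤
      (4 * L^2 / Real.pi^2) * ∫ x in (0:ℝ)..L, (y'' x)^2 :=
  wirtinger_first_derivative_general L hL y' y'' hy2 hy2c h0'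
end

section
/- Let L > 0, ρ > 0, and let z, y : [0,L] → ℝ with z, y_x square-integrable, y ∈ C¹([0,L]) with y(0)=0 and y'(0)=0 (where y_x denotes y'). Then V₁ := ρ∫₀ᴸ (x−L) z(x) y'(x) dx satisfies V₁ ≥ −(ρL/2)∫₀ᴸ z(x)² dx − (2ρL³/π²)∫₀ᴸ y''(x)² dx, assuming y ∈ C². -/
open Real MeasureTheory Set

/-!
Writing `y'(x) = ∫₀ˣ y''` and applying Cauchy–Schwarz gives `y'(x)² ≤ x ∫₀ᴸ y''²`. Young's
inequality, weighted by `L - x ≥ 0`, then bounds the integrand `(x - L) z y'` from below by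
`-(L/2) z² - ((L - x) x / 2) ∫₀ᴸ y''²`; since `∫₀ᴸ (L - x) x = L³/6`, integrating yields the
constant `L³/12`, which is at most `2L³/π²`.
-/

theorem sq_integral_le_mul_integral_sq {g : ℝ → ℝ} {a b : ℝ} (hab : a ≤ b)
    (hg : IntervalIntegrable g volume a b)
    (hg2 : IntervalIntegrable (fun t => g t ^ 2) volume a b) :
    (∫ t in a..b, g t) ^ 2 ≤ (b - a) * ∫ t in a..b, g t ^ 2 := by
  -- `c ↦ ∫ (g - c)²` is a nonnegative quadratic, so its discriminant is nonpositive
  have hquad : ∀ c : ℝ, 0 ≤ (b - a) * (c * c) + (-2 * ∫ t in a..b, g t) * c +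
      ∫ t in a..b, g t ^ 2 := by
    intro c
    have hexpand : ∫ t in a..b, (g t - c) ^ 2 =
        (b - a) * (c * c) + (-2 * ∫ t in a..b, g t) * c + ∫ t in a..b, g t ^ 2 := by
      have hg' : IntervalIntegrable (fun t => 2 * g t * c) volume a b :=
        (hg.const_mul 2).mul_const c
      simp only [sub_sq]
      rw [intervalIntegral.integral_add (hg2.sub hg') intervalIntegrable_const,
        intervalIntegral.integral_sub hg2 hg', intervalIntegral.integral_mul_const,
        intervalIntegral.integral_const_mul, intervalIntegral.integral_const, smul_eq_mul]
      ring
    rw [← hexpand]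
    exact intervalIntegral.integral_nonneg hab fun t _ => sq_nonneg _
  have := discrim_le_zero hquad
  rw [discrim] at this
  linarith

theorem sq_le_mul_integral_sq_deriv {f f' : ℝ → ℝ} {a b : ℝ}
    (hf : ∀ x ∈ Icc a b, HasDerivWithinAt f (f' x) (Icc a b) x)
    (hf' : ContinuousOn f' (Icc a b)) (ha : f a = 0) {x : ℝ} (hx : x ∈ Icc a b) :
    f x ^ 2 ≤ (x - a) * ∫ t in a..b, f' t ^ 2 := by
  have hsub : Icc a x ⊆ Icc a b := Icc_subset_Icc le_rfl hx.2
  have hf'x : ContinuousOn f' (Icc a x) := hf'.mono hsub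
  have hftc : ∫ t in a..x, f' t = f x := by
    rw [intervalIntegral.integral_eq_sub_of_hasDeriv_right_of_le hx.1
      (HasDerivWithinAt.continuousOn fun t ht => (hf t (hsub ht)).mono hsub)
      (fun t ht => ((hf t (hsub (Ioo_subset_Icc_self ht))).mono hsub).mono_of_mem_nhdsWithin
        (Icc_mem_nhdsGT_of_mem ⟨ht.1.le, ht.2⟩))
      (hf'x.intervalIntegrable_of_Icc hx.1), ha, sub_zero]
  calc f x ^ 2 ≤ (x - a) * ∫ t in a..x, f' t ^ 2 := by
        rw [← hftc]
        exact sq_integral_le_mul_integral_sq hx.1 (hf'x.intervalIntegrable_of_Icc hx.1)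
          ((hf'x.pow 2).intervalIntegrable_of_Icc hx.1)
    _ ≤ (x - a) * ∫ t in a..b, f' t ^ 2 := by
        gcongr ?_ * ?_
        · linarith [hx.1]
        · exact intervalIntegral.integral_mono_interval le_rfl hx.1 hx.2
            (Filter.Eventually.of_forall fun t => sq_nonneg _)
            ((hf'.pow 2).intervalIntegrable_of_Icc (hx.1.trans hx.2))

theorem integral_sub_mul_self (L : ℝ) : ∫ x in (0:ℝ)..L, (L - x) * x = L ^ 3 / 6 := by
  have h : ∀ x : ℝ, (L - x) * x = L * x - x ^ 2 := fun x => by ring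
  simp_rw [h]
  rw [intervalIntegral.integral_sub ((continuous_const_mul L).intervalIntegrable _ _)
    ((continuous_pow 2).intervalIntegrable _ _), intervalIntegral.integral_const_mul,
    integral_id, integral_pow]
  ring

theorem one_div_twelve_le_two_div_pi_sq : (1 / 12 : ℝ) ≤ 2 / π ^ 2 := by
  rw [div_le_div_iff₀ (by norm_num) (by positivity)]
  nlinarith [pi_pos, pi_le_four]

theorem V1_lower_bound_general
    (L ρ : ℝ) (hL : 0 < L) (hρ : 0 < ρ) (z y' y'' : ℝ → ℝ)
    (hz : IntervalIntegrable (fun x => (z x)^2) volume 0 L)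
    (hint : IntervalIntegrable (fun x => (x - L) * z x * y' x) volume 0 L)
    (hy2 : ∀ x ∈ Icc (0:ℝ) L, HasDerivWithinAt y' (y'' x) (Icc (0:ℝ) L) x)
    (hy2c : ContinuousOn y'' (Icc (0:ℝ) L))
    (h0' : y' 0 = 0) :
    ρ * ∫ x in (0:ℝ)..L, (x - L) * z x * y' x ≥
      -(ρ * L / 2) * (∫ x in (0:ℝ)..L, (z x)^2)
        - (2 * ρ * L^3 / Real.pi^2) * ∫ x in (0:ℝ)..L, (y'' x)^2 := by
  set C := ∫ x in (0:ℝ)..L, (y'' x)^2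
  have hC : 0 ≤ C := intervalIntegral.integral_nonneg hL.le fun t _ => sq_nonneg _
  have hpointwise : ∀ x ∈ Icc 0 L,
      -(L / 2) * (z x)^2 - C / 2 * ((L - x) * x) ≤ (x - L) * z x * y' x := by
    intro x hx
    have hy' : y' x ^ 2 ≤ x * C := by simpa using sq_le_mul_integral_sq_deriv hy2 hy2c h0' hx
    nlinarith [mul_nonneg (sub_nonneg.2 hx.2) (sq_nonneg (z x - y' x)),
      mul_nonneg hx.1 (sq_nonneg (z x)), mul_nonneg (sub_nonneg.2 hx.2) (sub_nonneg.2 hy')]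
  have hpoly : Continuous fun x : ℝ => (L - x) * x := by fun_prop
  have hlower := (hz.const_mul (-(L / 2))).sub ((hpoly.intervalIntegrable 0 L).const_mul (C / 2))
  have hintegral := intervalIntegral.integral_mono_on hL.le hlower hint hpointwise
  rw [intervalIntegral.integral_sub (hz.const_mul _) ((hpoly.intervalIntegrable 0 L).const_mul _),
    intervalIntegral.integral_const_mul, intervalIntegral.integral_const_mul,
    integral_sub_mul_self] at hintegral
  have hπ := mul_le_mul_of_nonneg_left one_div_twelve_le_two_div_pi_sq
    (by positivity : 0 ≤ ρ * L ^ 3 * C)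
  calc -(ρ * L / 2) * (∫ x in (0:ℝ)..L, (z x)^2) - (2 * ρ * L^3 / π^2) * C
      ≤ ρ * (-(L / 2) * (∫ x in (0:ℝ)..L, (z x)^2) - C / 2 * (L ^ 3 / 6)) := by
        ring_nf at hπ ⊢; linarith
    _ ≤ ρ * ∫ x in (0:ℝ)..L, (x - L) * z x * y' x := mul_le_mul_of_nonneg_left hintegral hρ.le

/-- Lower bound on the cross term V₁ = ρ∫₀ᴸ (x−L) z y' dx:
    V₁ ≥ −(ρL/2)∫₀ᴸ z² − (2ρL³/π²)∫₀ᴸ (y'')². -/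
theorem V1_lower_bound
    (L ρ : ℝ) (hL : 0 < L) (hρ : 0 < ρ) (z y y' y'' : ℝ → ℝ)
    (hz : IntervalIntegrable (fun x => (z x)^2) volume 0 L)
    (hint : IntervalIntegrable (fun x => (x - L) * z x * y' x) volume 0 L)
    (hy1 : ∀ x ∈ Icc (0:ℝ) L, HasDerivWithinAt y (y' x) (Icc (0:ℝ) L) x)
    (hy2 : ∀ x ∈ Icc (0:ℝ) L, HasDerivWithinAt y' (y'' x) (Icc (0:ℝ) L) x)
    (hy2c : ContinuousOn y'' (Icc (0:ℝ) L))
    (h0 : y 0 = 0) (h0' : y' 0 = 0) :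
    ρ * ∫ x in (0:ℝ)..L, (x - L) * z x * y' x ≥
      -(ρ * L / 2) * (∫ x in (0:ℝ)..L, (z x)^2)
        - (2 * ρ * L^3 / Real.pi^2) * ∫ x in (0:ℝ)..L, (y'' x)^2 :=
  V1_lower_bound_general L ρ hL hρ z y' y'' hz hint hy2 hy2c h0'
end

section
/- Let L, EI, ρ, J > 0. Then there exist a₁, a₂, a₃, a₄, k₁, k₂, δ, η > 0 satisfying simultaneously: 1 − La₃ − a₄ > 0; EI/2 − 2ρL³a₃/π² − 8ρL⁴a₄/π⁴ > 0; EIa₁/2 − 2ρL³a₄/π² > 0; JEI/a₂ − k₂J² − ρL²a₃/(2δ) − 2ρL³a₄/3 > 0; (1 − Lδ)a₃ − 4a₄ > 0; k₂a₂² − ηk₂a₁a₂² + EIηa₄/2 − LEIa₃/2 ≥ 0; and k₂a₁²a₂² − k₂a₁a₂²/η + EIa₄/(2η) > 0. -/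
/-!
Take `a₃ = 2 k₂ a₂² / (L EI)`, `a₄ = 2 k₂ a₁ a₂² / EI` and `η = 1 / a₁`. Then the cross coefficient
vanishes identically, the last condition reads `k₂ a₁² a₂² > 0`, and `(1 - L δ) a₃ - 4 a₄` is a
positive multiple of `k₂` as soon as `4 L a₁ < 1 - L δ`. The first four conditions are strict and
hold at `k₂ = 0`, so by continuity they hold for every sufficiently small `k₂ > 0`.
-/

open Real Filter Topology

section GainConstruction

variable {L EI ρ J a₁ a₂ k₂ δ : ℝ}

theorem eventually_pos_nhdsGT_of_continuous {f : ℝ → ℝ} (hf : Continuous f) (h₀ : 0 < f 0) :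
    ∀ᶠ k in 𝓝[>] 0, 0 < f k :=
  nhdsWithin_le_nhds ((hf.tendsto 0).eventually_const_lt h₀)

theorem eventually_small_gain_conditions (hEI : 0 < EI) (hJ : 0 < J) (ha₁ : 0 < a₁)
    (ha₂ : 0 < a₂) :
    ∀ᶠ k in 𝓝[>] 0,
      1 - L * (2 * k * a₂^2 / (L * EI)) - 2 * k * a₁ * a₂^2 / EI > 0 ∧
      EI / 2 - 2 * ρ * L^3 * (2 * k * a₂^2 / (L * EI)) / π^2
        - 8 * ρ * L^4 * (2 * k * a₁ * a₂^2 / EI) / π^4 > 0 ∧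
      EI * a₁ / 2 - 2 * ρ * L^3 * (2 * k * a₁ * a₂^2 / EI) / π^2 > 0 ∧
      J * EI / a₂ - k * J^2 - ρ * L^2 * (2 * k * a₂^2 / (L * EI)) / (2 * δ)
        - 2 * ρ * L^3 * (2 * k * a₁ * a₂^2 / EI) / 3 > 0 := by
  refine .and (eventually_pos_nhdsGT_of_continuous (by fun_prop) (by simp)) <| .and
    (eventually_pos_nhdsGT_of_continuous (by fun_prop) (by simpa)) <| .and
    (eventually_pos_nhdsGT_of_continuous (by fun_prop) (by simpa using mul_pos hEI ha₁))
    (eventually_pos_nhdsGT_of_continuous (by fun_prop)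
      (by simpa using div_pos (mul_pos hJ hEI) ha₂))

theorem damping_condition_pos (hL : 0 < L) (hEI : 0 < EI) (hk : 0 < k₂) (ha₂ : 0 < a₂)
    (h : 4 * L * a₁ < 1 - L * δ) :
    (1 - L * δ) * (2 * k₂ * a₂^2 / (L * EI)) - 4 * (2 * k₂ * a₁ * a₂^2 / EI) > 0 := by
  have key : (1 - L * δ) * (2 * k₂ * a₂^2 / (L * EI)) - 4 * (2 * k₂ * a₁ * a₂^2 / EI)
      = 2 * k₂ * a₂^2 / (L * EI) * (1 - L * δ - 4 * L * a₁) := by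
    field_simp
  rw [key]
  exact mul_pos (by positivity) (by linarith)

theorem cross_coeff_eq_zero (hL : L ≠ 0) (hEI : EI ≠ 0) (ha₁ : a₁ ≠ 0) :
    k₂ * a₂^2 - a₁⁻¹ * k₂ * a₁ * a₂^2 + EI * a₁⁻¹ * (2 * k₂ * a₁ * a₂^2 / EI) / 2
      - L * EI * (2 * k₂ * a₂^2 / (L * EI)) / 2 = 0 := by
  field_simp
  ring

theorem last_condition_eq (hEI : EI ≠ 0) (ha₁ : a₁ ≠ 0) :
    k₂ * a₁^2 * a₂^2 - k₂ * a₁ * a₂^2 / a₁⁻¹ + EI * (2 * k₂ * a₁ * a₂^2 / EI) / (2 * a₁⁻¹)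
      = k₂ * a₁^2 * a₂^2 := by
  field_simp
  ring

end GainConstruction

theorem gain_feasibility_general
    (L EI ρ J : ℝ) (hL : 0 < L) (hEI : 0 < EI) (hJ : 0 < J) :
    ∃ a₁ a₂ a₃ a₄ k₁ k₂ δ η : ℝ,
      0 < a₁ ∧ 0 < a₂ ∧ 0 < a₃ ∧ 0 < a₄ ∧ 0 < k₁ ∧ 0 < k₂ ∧ 0 < δ ∧ 0 < η ∧
      1 - L * a₃ - a₄ > 0 ∧
      EI / 2 - 2 * ρ * L^3 * a₃ / Real.pi^2 - 8 * ρ * L^4 * a₄ / Real.pi^4 > 0 ∧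
      EI * a₁ / 2 - 2 * ρ * L^3 * a₄ / Real.pi^2 > 0 ∧
      J * EI / a₂ - k₂ * J^2 - ρ * L^2 * a₃ / (2 * δ) - 2 * ρ * L^3 * a₄ / 3 > 0 ∧
      (1 - L * δ) * a₃ - 4 * a₄ > 0 ∧
      k₂ * a₂^2 - η * k₂ * a₁ * a₂^2 + EI * η * a₄ / 2 - L * EI * a₃ / 2 ≥ 0 ∧
      k₂ * a₁^2 * a₂^2 - k₂ * a₁ * a₂^2 / η + EI * a₄ / (2 * η) > 0 := by
  have ha₁ : 0 < 1 / (16 * L) := by positivity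
  obtain ⟨k, ⟨h₁, h₂, h₃, h₄⟩, hk : 0 < k⟩ :=
    ((eventually_small_gain_conditions (L := L) (ρ := ρ) (δ := 1 / (2 * L))
      hEI hJ ha₁ one_pos).and self_mem_nhdsWithin).exists
  refine ⟨1 / (16 * L), 1, 2 * k * 1^2 / (L * EI), 2 * k * (1 / (16 * L)) * 1^2 / EI, 1, k,
    1 / (2 * L), (1 / (16 * L))⁻¹, ha₁, one_pos, by positivity, by positivity, one_pos, hk,
    by positivity, by positivity, h₁, h₂, h₃, h₄, ?_, ?_, ?_⟩
  · refine damping_condition_pos hL hEI hk one_pos ?_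
    field_simp
    norm_num
  · exact (cross_coeff_eq_zero hL.ne' hEI.ne' ha₁.ne').ge
  · rw [last_condition_eq hEI.ne' ha₁.ne']
    positivity

/-- Feasibility of the Lyapunov controller gains for the flexible spacecraft. -/
theorem gain_feasibility
    (L EI ρ J : ℝ) (hL : 0 < L) (hEI : 0 < EI) (hρ : 0 < ρ) (hJ : 0 < J) :
    ∃ a₁ a₂ a₃ a₄ k₁ k₂ δ η : ℝ,
      0 < a₁ ∧ 0 < a₂ ∧ 0 < a₃ ∧ 0 < a₄ ∧ 0 < k₁ ∧ 0 < k₂ ∧ 0 < δ ∧ 0 < η ∧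
      1 - L * a₃ - a₄ > 0 ∧
      EI / 2 - 2 * ρ * L^3 * a₃ / Real.pi^2 - 8 * ρ * L^4 * a₄ / Real.pi^4 > 0 ∧
      EI * a₁ / 2 - 2 * ρ * L^3 * a₄ / Real.pi^2 > 0 ∧
      J * EI / a₂ - k₂ * J^2 - ρ * L^2 * a₃ / (2 * δ) - 2 * ρ * L^3 * a₄ / 3 > 0 ∧
      (1 - L * δ) * a₃ - 4 * a₄ > 0 ∧
      k₂ * a₂^2 - η * k₂ * a₁ * a₂^2 + EI * η * a₄ / 2 - L * EI * a₃ / 2 ≥ 0 ∧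
      k₂ * a₁^2 * a₂^2 - k₂ * a₁ * a₂^2 / η + EI * a₄ / (2 * η) > 0 :=
  gain_feasibility_general L EI ρ J hL hEI hJ
end
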